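/- Let Φ be the MPP instance reduced from a 3SAT instance (X, C) with n variables and m clauses (as described in the context). In the graph of Φ, the graph distance from v_{x_i} to v_{x_i}^g equals m+2 for every variable x_i, and the graph distance from v_{c_j} to v_{c_j}^g equals m+2 for every clause c_j. -/

import Mathlib

/-!
Formalization of multi-robot path planning on graphs (MPP).

An MPP instance consists of a connected simple graph `G` on a vertex type `V`,
a finite set of robots (an index type `R`), and injective start/goal
configurations `xI xG : R → V`.  A scheduled path is a map `ℕ → V`.
-/

namespace MPPFormal

variable {V R : Type}

/-- The arrival time of a path `p` with goal `g`: the smallest time `t`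
with `p t = g`. -/
noncomputable def arrivalTime (g : V) (p : ℕ → V) : ℕ := sInf {t | p t = g}

/-- A feasible scheduled path from `s` to `g` in the graph `G`:
it starts at `s`, reaches `g` at some time, stays at `g` forever after the
first time it reaches `g`, and at every time step it either traverses an
edge of `G` or stays put. -/
def FeasiblePath (G : SimpleGraph V) (s g : V) (p : ℕ → V) : Prop :=
  p 0 = s ∧ (∃ t, p t = g) ∧ (∀ t, arrivalTime g p ≤ t → p t = g) ∧
    ∀ t, G.Adj (p t) (p (t + 1)) ∨ p t = p (t + 1)

/-- Two scheduled paths collide if they meet at the same vertex at the same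
time, or if they swap along an edge head-on. -/
def Collide (p q : ℕ → V) : Prop :=
  (∃ t, p t = q t) ∨ ∃ t, p t = q (t + 1) ∧ p (t + 1) = q t ∧ p t ≠ p (t + 1)

/-- The length of a scheduled path: the number of time steps at which it
actually moves. -/
noncomputable def pathLen (p : ℕ → V) : ℕ := Set.ncard {t | p t ≠ p (t + 1)}

/-- A solution to the MPP instance `(G, R, xI, xG)`: a family of pairwise
non-colliding feasible paths, one per robot. -/
def IsSolution (G : SimpleGraph V) (xI xG : R → V) (p : R → ℕ → V) : Prop :=
  (∀ i, FeasiblePath G (xI i) (xG i) (p i)) ∧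
    Pairwise fun i j => ¬ Collide (p i) (p j)

/-- `(G, xI, xG)` together with the robot index type `R` forms an MPP
instance: the graph is connected and the start and goal configurations are
injective. -/
def IsMPPInstance (G : SimpleGraph V) (xI xG : R → V) : Prop :=
  G.Connected ∧ Function.Injective xI ∧ Function.Injective xG

variable [Fintype R]

/-- Total arrival time of a solution. -/
noncomputable def totalTime (xG : R → V) (p : R → ℕ → V) : ℕ :=
  ∑ i, arrivalTime (xG i) (p i)

/-- Makespan (last arrival time) of a solution. -/
noncomputable def makespan (xG : R → V) (p : R → ℕ → V) : ℕ :=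
  Finset.univ.sup fun i => arrivalTime (xG i) (p i)

/-- Total distance traveled in a solution. -/
noncomputable def totalDist (p : R → ℕ → V) : ℕ := ∑ i, pathLen (p i)

/-- Maximum single-robot distance of a solution. -/
noncomputable def maxDist (p : R → ℕ → V) : ℕ :=
  Finset.univ.sup fun i => pathLen (p i)

/-- Minimum total arrival time over all solutions. -/
noncomputable def minTotalTime (G : SimpleGraph V) (xI xG : R → V) : ℕ :=
  sInf {c | ∃ p, IsSolution G xI xG p ∧ totalTime xG p = c}

/-- Minimum makespan over all solutions. -/
noncomputable def minMakespan (G : SimpleGraph V) (xI xG : R → V) : ℕ :=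
  sInf {c | ∃ p, IsSolution G xI xG p ∧ makespan xG p = c}

/-- Minimum total distance over all solutions. -/
noncomputable def minTotalDist (G : SimpleGraph V) (xI xG : R → V) : ℕ :=
  sInf {c | ∃ p, IsSolution G xI xG p ∧ totalDist p = c}

/-- Minimum maximum distance over all solutions. -/
noncomputable def minMaxDist (G : SimpleGraph V) (xI xG : R → V) : ℕ :=
  sInf {c | ∃ p, IsSolution G xI xG p ∧ maxDist p = c}

end MPPFormal

/-!
The reduction from 3SAT to MPP.

A 3SAT instance over `n` variables with `m` clauses assigns to each clause
`j : Fin m` three literals; a literal is a pair `(i, b) : Fin n × Bool`,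
`b = true` meaning the non-negated variable `x_i` and `b = false` the
negated literal `¬ x_i`.  The three literals of each clause involve three
distinct variables.
-/

namespace MPPFormal

/-- A 3SAT instance with variables `x_1, …, x_n` and clauses `c_1, …, c_m`. -/
structure ThreeSat (n m : ℕ) where
  lit : Fin m → Fin 3 → Fin n × Bool
  distinctVars : ∀ j (k k' : Fin 3), k ≠ k' → (lit j k).1 ≠ (lit j k').1

/-- An assignment `a` satisfies the instance if every clause contains a true
literal. -/
def ThreeSat.SatisfiedBy {n m : ℕ} (sat : ThreeSat n m) (a : Fin n → Bool) : Prop :=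
  ∀ j, ∃ k, a (sat.lit j k).1 = (sat.lit j k).2

/-- Satisfiability of a 3SAT instance. -/
def ThreeSat.Satisfiable {n m : ℕ} (sat : ThreeSat n m) : Prop :=
  ∃ a, sat.SatisfiedBy a

/-- Vertices of the MPP instance `Φ` reduced from a 3SAT instance with `n`
variables and `m` clauses:
* `vx i` is the left endpoint `v_{x_i}` of the `i`-th variable strip (start of
  the variable robot `r_{x_i}`);
* `vxg i` is the right endpoint `v_{x_i}^g` (goal of `r_{x_i}`);
* `mid i side k` is the interior vertex of the `i`-th upper (`side = true`)
  or lower (`side = false`) path lying at distance `k + 1` from `vx i`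
  (each of the two paths has length `m + 2`, hence `m + 1` interior
  vertices, `k : Fin (m+1)`);
* `vc j` is the start vertex `v_{c_j}` of the clause robot `r_{c_j}`;
* `vcg j` is its goal vertex `v_{c_j}^g`. -/
inductive PhiV (n m : ℕ) where
  | vx (i : Fin n)
  | vxg (i : Fin n)
  | mid (i : Fin n) (side : Bool) (k : Fin (m + 1))
  | vc (j : Fin m)
  | vcg (j : Fin m)
deriving DecidableEq

/-- Base relation generating the edges of `Φ`:
the two length-`(m+2)` paths of each variable strip; an edge from `v_{c_j}`
to the vertex at distance `j + 1` (`1`-indexed: distance `j`) from `v_{x_i}`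
on the upper (resp. lower) path of `x_i` for each non-negated (resp. negated)
literal of `c_j`; the path `v_{c_1}^g - ⋯ - v_{c_m}^g`; and edges from
`v_{c_m}^g` to every `v_{x_i}`. -/
def phiRel {n m : ℕ} (sat : ThreeSat n m) : PhiV n m → PhiV n m → Prop
  | PhiV.vx i, PhiV.mid i' _ k => i = i' ∧ (k : ℕ) = 0
  | PhiV.mid i s k, PhiV.mid i' s' k' => i = i' ∧ s = s' ∧ (k' : ℕ) = (k : ℕ) + 1
  | PhiV.mid i _ k, PhiV.vxg i' => i = i' ∧ (k : ℕ) = m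
  | PhiV.vc j, PhiV.mid i s k => (∃ l, sat.lit j l = (i, s)) ∧ (k : ℕ) = (j : ℕ)
  | PhiV.vcg j, PhiV.vcg j' => (j' : ℕ) = (j : ℕ) + 1
  | PhiV.vcg j, PhiV.vx _ => (j : ℕ) + 1 = m
  | _, _ => False

/-- The graph of the reduced MPP instance `Φ`. -/
def phiGraph {n m : ℕ} (sat : ThreeSat n m) : SimpleGraph (PhiV n m) :=
  SimpleGraph.fromRel (phiRel sat)

/-- Start configuration of `Φ`: the variable robot `r_{x_i}` (index
`Sum.inl i`) starts at `v_{x_i}`; the clause robot `r_{c_j}` (index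
`Sum.inr j`) starts at `v_{c_j}`. -/
def phiStart {n m : ℕ} : Fin n ⊕ Fin m → PhiV n m :=
  Sum.elim PhiV.vx PhiV.vc

/-- Goal configuration of `Φ`: `r_{x_i}` must reach `v_{x_i}^g` and `r_{c_j}`
must reach `v_{c_j}^g`. -/
def phiGoal {n m : ℕ} : Fin n ⊕ Fin m → PhiV n m :=
  Sum.elim PhiV.vxg PhiV.vcg

end MPPFormal

/-!
Lower bounds come from potentials: a function `f : V → ℕ` that grows by at most one along each
edge satisfies `f v ≤ f u + dist u v`. For `v_{x_i}` take the height along the strips, with each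
clause vertex one level above its strip neighbours and the clause-goal path flattened to height
`0`; for `v_{c_j}` take a lower bound on the distance from `v_{c_j}^g`. Both potentials rise by
exactly `m + 2` along a walk of that length: a strip for `r_{x_i}`, and
`v_{c_j}^g → ⋯ → v_{c_m}^g → v_{x_i} → ⋯ → v_{c_j}` through a literal of `c_j` for `r_{c_j}`.
-/

namespace SimpleGraph

variable {V : Type*} {G : SimpleGraph V} {f : V → ℕ}

theorem Walk.le_add_length_of_adj_le_add_one (hf : ∀ u v, G.Adj u v → f v ≤ f u + 1)
    {u v : V} (p : G.Walk u v) : f v ≤ f u + p.length := by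
  induction p with
  | nil => simp
  | cons h _ ih =>
    rw [Walk.length_cons]
    have := hf _ _ h
    omega

theorem Walk.dist_eq_length_of_adj_le_add_one (hf : ∀ u v, G.Adj u v → f v ≤ f u + 1)
    {u v : V} (p : G.Walk u v) (hp : f u + p.length ≤ f v) : G.dist u v = p.length := by
  obtain ⟨q, hq⟩ := p.reachable.exists_walk_length_eq_dist
  have := q.le_add_length_of_adj_le_add_one hf
  have := G.dist_le p
  omega

theorem exists_walk_length_eq_sub (g : ℕ → V) {a b : ℕ} (hab : a ≤ b)
    (hg : ∀ k, a ≤ k → k < b → G.Adj (g k) (g (k + 1))) :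
    ∃ p : G.Walk (g a) (g b), p.length = b - a := by
  induction b, hab using Nat.le_induction with
  | base => exact ⟨Walk.nil, by simp⟩
  | succ b hab ih =>
    obtain ⟨p, hp⟩ := ih fun k hak hkb => hg k hak (by omega)
    exact ⟨p.concat (hg b hab (by omega)), by rw [Walk.length_concat]; omega⟩

theorem fromRel_adj_le_add_one {r : V → V → Prop}
    (hr : ∀ u v, r u v → f v ≤ f u + 1 ∧ f u ≤ f v + 1) {u v : V} (h : (fromRel r).Adj u v) :
    f v ≤ f u + 1 := by
  obtain ⟨-, h | h⟩ := h
  exacts [(hr u v h).1, (hr v u h).2]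

end SimpleGraph

namespace MPPFormal

open SimpleGraph

variable {n m : ℕ} (sat : ThreeSat n m)

theorem phiRel_irrefl (v : PhiV n m) : ¬ phiRel sat v v := by
  cases v <;> simp [phiRel]

theorem phiGraph_adj_of_phiRel {u v : PhiV n m} (h : phiRel sat u v) : (phiGraph sat).Adj u v :=
  (fromRel_adj _ _ _).2 ⟨fun huv => phiRel_irrefl sat u (huv ▸ h), Or.inl h⟩

/-- The vertex at distance `k` from `v_{x_i}` along strip `s`. -/
def stripVertex (i : Fin n) (s : Bool) : ℕ → PhiV n m
  | 0 => PhiV.vx i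
  | k + 1 => if h : k ≤ m then PhiV.mid i s ⟨k, by omega⟩ else PhiV.vxg i

def goalPathVertex (i : Fin n) (k : ℕ) : PhiV n m :=
  if h : k < m then PhiV.vcg ⟨k, h⟩ else PhiV.vx i

theorem stripVertex_adj (i : Fin n) (s : Bool) {k : ℕ} (hk : k < m + 2) :
    (phiGraph sat).Adj (stripVertex i s k) (stripVertex i s (k + 1)) := by
  apply phiGraph_adj_of_phiRel
  rcases k with _ | k
  · simp [stripVertex, phiRel]
  · simp only [stripVertex]
    split_ifs <;> simp [phiRel] <;> omega

theorem goalPathVertex_adj (i : Fin n) {k : ℕ} (hk : k < m) :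
    (phiGraph sat).Adj (goalPathVertex i k) (goalPathVertex i (k + 1)) := by
  apply phiGraph_adj_of_phiRel
  simp only [goalPathVertex, hk, dite_true]
  split_ifs
  · simp [phiRel]
  · simp [phiRel]; omega

def variablePotential : PhiV n m → ℕ
  | PhiV.vx _ => 0
  | PhiV.mid _ _ k => k + 1
  | PhiV.vxg _ => m + 2
  | PhiV.vc j => j + 2
  | PhiV.vcg _ => 0

def clausePotential (j : Fin m) : PhiV n m → ℕ
  | PhiV.vx _ => m - j
  | PhiV.mid _ _ k => m - j + k + 1
  | PhiV.vxg _ => m - j + m + 2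
  | PhiV.vc j' => m - j + j' + 2
  | PhiV.vcg j' => (j' - j) + (j - j')

theorem variablePotential_adj_le (u v : PhiV n m) (h : (phiGraph sat).Adj u v) :
    variablePotential v ≤ variablePotential u + 1 := by
  refine fromRel_adj_le_add_one (fun u v huv => ?_) h
  cases u <;> cases v <;> simp only [phiRel] at huv <;> simp only [variablePotential] <;> omega

theorem clausePotential_adj_le (j : Fin m) (u v : PhiV n m) (h : (phiGraph sat).Adj u v) :
    clausePotential j v ≤ clausePotential j u + 1 := by
  refine fromRel_adj_le_add_one (fun u v huv => ?_) h
  have := j.isLt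
  cases u <;> cases v <;> simp only [phiRel] at huv <;> simp only [clausePotential] <;> omega

theorem exists_walk_vx_vxg (i : Fin n) (s : Bool) :
    ∃ p : (phiGraph sat).Walk (PhiV.vx i) (PhiV.vxg i), p.length = m + 2 := by
  obtain ⟨p, hp⟩ := exists_walk_length_eq_sub (stripVertex i s) (Nat.zero_le (m + 2))
    fun k _ hk => stripVertex_adj sat i s hk
  have hend : stripVertex i s (m + 2) = PhiV.vxg (m := m) i := by simp [stripVertex]
  have hstart : stripVertex i s 0 = PhiV.vx (m := m) i := rfl
  exact ⟨p.copy hstart hend, by rw [Walk.length_copy, hp, Nat.sub_zero]⟩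

theorem exists_walk_vx_mid (i : Fin n) (s : Bool) (k : Fin (m + 1)) :
    ∃ p : (phiGraph sat).Walk (PhiV.vx i) (PhiV.mid i s k), p.length = k + 1 := by
  obtain ⟨p, hp⟩ := exists_walk_length_eq_sub (stripVertex i s) (Nat.zero_le (k + 1))
    fun l _ hl => stripVertex_adj sat i s (by omega)
  have hend : stripVertex i s (k + 1) = PhiV.mid i s k := by
    simp [stripVertex, Nat.le_of_lt_succ k.isLt]
  have hstart : stripVertex i s 0 = PhiV.vx (m := m) i := rfl
  exact ⟨p.copy hstart hend, by rw [Walk.length_copy, hp, Nat.sub_zero]⟩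

theorem exists_walk_vcg_vx (j : Fin m) (i : Fin n) :
    ∃ p : (phiGraph sat).Walk (PhiV.vcg j) (PhiV.vx i), p.length = m - j := by
  obtain ⟨p, hp⟩ := exists_walk_length_eq_sub (goalPathVertex i) j.isLt.le
    fun k _ hk => goalPathVertex_adj sat i hk
  have hstart : goalPathVertex i j = PhiV.vcg j := by simp [goalPathVertex]
  have hend : goalPathVertex i m = PhiV.vx (m := m) i := by simp [goalPathVertex]
  exact ⟨p.copy hstart hend, by rw [Walk.length_copy, hp]⟩

theorem dist_vx_vxg (i : Fin n) : (phiGraph sat).dist (PhiV.vx i) (PhiV.vxg i) = m + 2 := by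
  obtain ⟨p, hp⟩ := exists_walk_vx_vxg sat i true
  rw [← hp]
  exact p.dist_eq_length_of_adj_le_add_one (variablePotential_adj_le sat)
    (by simp [hp, variablePotential])

theorem dist_vcg_vc (j : Fin m) : (phiGraph sat).dist (PhiV.vcg j) (PhiV.vc j) = m + 2 := by
  obtain ⟨⟨i, s⟩, hlit⟩ : ∃ l, sat.lit j 0 = l := ⟨_, rfl⟩
  let k : Fin (m + 1) := ⟨j, by omega⟩
  have hedge : (phiGraph sat).Adj (PhiV.mid i s k) (PhiV.vc j) :=
    (phiGraph_adj_of_phiRel sat (show phiRel sat (PhiV.vc j) (PhiV.mid i s k) from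
      ⟨⟨0, hlit⟩, rfl⟩)).symm
  obtain ⟨p, hp⟩ := exists_walk_vcg_vx sat j i
  obtain ⟨q, hq⟩ := exists_walk_vx_mid sat i s k
  have hlen : (p.append (q.concat hedge)).length = m + 2 := by
    rw [Walk.length_append, Walk.length_concat, hp, hq]
    have := j.isLt
    simp only [k]
    omega
  rw [← hlen]
  exact Walk.dist_eq_length_of_adj_le_add_one (clausePotential_adj_le sat j) _
    (by simp [hlen, clausePotential])

theorem phi_distances_general {n m : ℕ} (sat : ThreeSat n m) :
    (∀ i : Fin n, (phiGraph sat).dist (PhiV.vx i) (PhiV.vxg i) = m + 2) ∧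
    ∀ j : Fin m, (phiGraph sat).dist (PhiV.vc j) (PhiV.vcg j) = m + 2 :=
  ⟨dist_vx_vxg sat, fun j => dist_comm.trans (dist_vcg_vc sat j)⟩

/-- In the graph of the MPP instance `Φ` reduced from a 3SAT instance with
`n` variables and `m` clauses, the graph distance from `v_{x_i}` to
`v_{x_i}^g` equals `m + 2` for every variable `x_i`, and the graph distance
from `v_{c_j}` to `v_{c_j}^g` equals `m + 2` for every clause `c_j`. -/
theorem phi_distances {n m : ℕ} (hm : 0 < m) (sat : ThreeSat n m) :
    (∀ i : Fin n, (phiGraph sat).dist (PhiV.vx i) (PhiV.vxg i) = m + 2) ∧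
    ∀ j : Fin m, (phiGraph sat).dist (PhiV.vc j) (PhiV.vcg j) = m + 2 :=
  phi_distances_general sat

end MPPFormal
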